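/- Let V_t be the value-iteration iterates (V_0 ≡ 0, V_{t+1}(S) = c(S) + min{(K_0 V_t)(S), (K_1 V_t)(S)}) and define ΔV_t(S) = (K_1 V_t)(S) − (K_0 V_t)(S). Then for every t ≥ 0, every battery level e ∈ {1,...,E_max}, every source state X ∈ {0,1}, and all VIA values Δ⁻, Δ⁺ with 1 ≤ Δ⁻ ≤ Δ⁺ ≤ Δ_max, one has ΔV_t(e, X, Δ⁺) ≤ ΔV_t(e, X, Δ⁻); that is, the advantage of transmitting over idling is nonincreasing in the VIA value (monotonicity step in the proof of Theorem 1). -/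
import Mathlib


open Finset

namespace VIA

/-- The MDP state space: battery level, source state, VIA value. -/
abbrev State (Emax Dmax : ℕ) := Fin (Emax + 1) × Bool × Fin (Dmax + 1)

/-- Deterministic next state given the action `a`, energy arrival `b`,
source-flip indicator `f`, and channel-success indicator `h`. -/
def nextState (Emax Dmax : ℕ) (s : State Emax Dmax) (a b f h : Bool) :
    State Emax Dmax :=
  let act : Bool := a && decide (0 < s.1.val)
  -- a successful transmission requires transmitting and channel success
  let succ : Bool := act && h
  (⟨min (s.1.val + (if b then 1 else 0) - (if act then 1 else 0)) Emax,
      Nat.lt_succ_of_le (min_le_right _ _)⟩,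
   (if f then !s.2.1 else s.2.1),
   ⟨min (if succ then (if f then 1 else 0)
         else (if f then s.2.2.val + 1 else s.2.2.val)) Dmax,
      Nat.lt_succ_of_le (min_le_right _ _)⟩)

/-- Bernoulli weight: probability `x` for `true`, `1 - x` for `false`. -/
def bern (x : ℝ) : Bool → ℝ := fun b => if b then x else 1 - x

/-- The transition kernel `K_a(s, s')` of the MDP, for action `a`
(`a = true` means transmit).  The source flips with probability `p`
from state `0 = false` and with probability `q` from state `1 = true`;
energy arrives with probability `β`; a transmission succeeds with
probability `ps`. -/
def K (Emax Dmax : ℕ) (p q β ps : ℝ) (a : Bool) (s s' : State Emax Dmax) : ℝ :=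
  ∑ b : Bool, ∑ f : Bool, ∑ h : Bool,
    bern β b * bern (if s.2.1 then q else p) f * bern ps h *
      (if nextState Emax Dmax s a b f h = s' then 1 else 0)

/-- The per-stage cost: the VIA value. -/
def cost (Emax Dmax : ℕ) (s : State Emax Dmax) : ℝ := s.2.2.val

/-- `(K_a V)(s) = ∑_{s'} K_a(s,s') V(s')`. -/
def KV (Emax Dmax : ℕ) (p q β ps : ℝ) (a : Bool) (V : State Emax Dmax → ℝ)
    (s : State Emax Dmax) : ℝ :=
  ∑ s' : State Emax Dmax, K Emax Dmax p q β ps a s s' * V s'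

/-- Value iteration: `V_0 ≡ 0`,
`V_{t+1}(s) = c(s) + min{(K_0 V_t)(s), (K_1 V_t)(s)}`. -/
def Viter (Emax Dmax : ℕ) (p q β ps : ℝ) : ℕ → State Emax Dmax → ℝ
  | 0 => fun _ => 0
  | t + 1 => fun s =>
      cost Emax Dmax s +
        min (KV Emax Dmax p q β ps false (Viter Emax Dmax p q β ps t) s)
            (KV Emax Dmax p q β ps true (Viter Emax Dmax p q β ps t) s)

/-- `ΔV_t(s) = (K_1 V_t)(s) − (K_0 V_t)(s)`. -/
def dV (Emax Dmax : ℕ) (p q β ps : ℝ) (t : ℕ) (s : State Emax Dmax) : ℝ :=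
  KV Emax Dmax p q β ps true (Viter Emax Dmax p q β ps t) s -
    KV Emax Dmax p q β ps false (Viter Emax Dmax p q β ps t) s


/-! ### Auxiliary development -/

/-- Normal form for states. -/
def mkS (Emax Dmax : ℕ) (e : ℕ) (X : Bool) (d : ℕ) : State Emax Dmax :=
  (⟨min e Emax, Nat.lt_succ_of_le (min_le_right _ _)⟩, X,
   ⟨min d Dmax, Nat.lt_succ_of_le (min_le_right _ _)⟩)

lemma bern_nonneg {x : ℝ} (h0 : 0 ≤ x) (h1 : x ≤ 1) (b : Bool) : 0 ≤ bern x b := by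
  cases b <;> simp [bern] <;> linarith

lemma KV_eq (Emax Dmax : ℕ) (p q β ps : ℝ) (a : Bool) (V : State Emax Dmax → ℝ)
    (s : State Emax Dmax) :
    KV Emax Dmax p q β ps a V s =
      ∑ b : Bool, ∑ f : Bool, ∑ h : Bool,
        bern β b * bern (if s.2.1 then q else p) f * bern ps h *
          V (nextState Emax Dmax s a b f h) := by
  unfold KV K
  simp only [Finset.sum_mul]
  rw [Finset.sum_comm]
  refine Finset.sum_congr rfl fun b _ => ?_
  rw [Finset.sum_comm]
  refine Finset.sum_congr rfl fun f _ => ?_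
  rw [Finset.sum_comm]
  refine Finset.sum_congr rfl fun h _ => ?_
  rw [show (∑ s' : State Emax Dmax,
      bern β b * bern (if s.2.1 then q else p) f * bern ps h *
        (if nextState Emax Dmax s a b f h = s' then 1 else 0) * V s') =
      ∑ s' : State Emax Dmax,
      (if nextState Emax Dmax s a b f h = s' then
        bern β b * bern (if s.2.1 then q else p) f * bern ps h * V s' else 0) from
    Finset.sum_congr rfl fun s' _ => by split_ifs <;> simp]
  rw [Finset.sum_ite_eq]
  simp

lemma nextState_mkS_true (Emax Dmax : ℕ) (e d : ℕ) (he1 : 1 ≤ e) (he2 : e ≤ Emax)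
    (X b f h : Bool) :
    nextState Emax Dmax (mkS Emax Dmax e X d) true b f h =
      mkS Emax Dmax (e + (if b then 1 else 0) - 1) (if f then !X else X)
        (if h then (if f then 1 else 0) else (if f then min d Dmax + 1 else min d Dmax)) := by
  have h1 : min e Emax = e := by omega
  simp only [nextState, mkS, h1]
  have h2 : (0 < e) := he1
  simp [h2, Prod.ext_iff, Fin.ext_iff]

lemma nextState_mkS_false (Emax Dmax : ℕ) (e d : ℕ) (X b f h : Bool) :
    nextState Emax Dmax (mkS Emax Dmax e X d) false b f h =
      mkS Emax Dmax (e + (if b then 1 else 0)) (if f then !X else X)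
        (if f then min d Dmax + 1 else min d Dmax) := by
  simp only [nextState, mkS]
  simp [Prod.ext_iff, Fin.ext_iff]
  omega

lemma mkS_fst (Emax Dmax : ℕ) (e : ℕ) (X : Bool) (d : ℕ) :
    (mkS Emax Dmax e X d).2.1 = X := rfl

lemma KV_false_mkS (Emax Dmax : ℕ) (p q β ps : ℝ) (V : State Emax Dmax → ℝ)
    (e d : ℕ) (X : Bool) :
    KV Emax Dmax p q β ps false V (mkS Emax Dmax e X d) =
      ∑ b : Bool, ∑ f : Bool,
        bern β b * bern (if X then q else p) f *
          V (mkS Emax Dmax (e + (if b then 1 else 0)) (if f then !X else X)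
              (if f then min d Dmax + 1 else min d Dmax)) := by
  rw [KV_eq]
  refine Finset.sum_congr rfl fun b _ => Finset.sum_congr rfl fun f _ => ?_
  rw [Fintype.sum_bool]
  simp only [nextState_mkS_false, mkS_fst]
  cases b <;> cases f <;> cases X <;> simp [bern] <;> ring

lemma KV_true_mkS (Emax Dmax : ℕ) (p q β ps : ℝ) (V : State Emax Dmax → ℝ)
    (e d : ℕ) (he1 : 1 ≤ e) (he2 : e ≤ Emax) (X : Bool) :
    KV Emax Dmax p q β ps true V (mkS Emax Dmax e X d) =
      ∑ b : Bool, ∑ f : Bool,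
        bern β b * bern (if X then q else p) f *
          (ps * V (mkS Emax Dmax (e + (if b then 1 else 0) - 1) (if f then !X else X)
              (if f then 1 else 0)) +
           (1 - ps) * V (mkS Emax Dmax (e + (if b then 1 else 0) - 1) (if f then !X else X)
              (if f then min d Dmax + 1 else min d Dmax))) := by
  rw [KV_eq]
  refine Finset.sum_congr rfl fun b _ => Finset.sum_congr rfl fun f _ => ?_
  rw [Fintype.sum_bool]
  simp only [nextState_mkS_true Emax Dmax e d he1 he2, mkS_fst]
  cases b <;> cases f <;> cases X <;> simp [bern] <;> ring

lemma KV_true_zero (Emax Dmax : ℕ) (p q β ps : ℝ) (V : State Emax Dmax → ℝ)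
    (e d : ℕ) (h0 : min e Emax = 0) (X : Bool) :
    KV Emax Dmax p q β ps true V (mkS Emax Dmax e X d) =
      KV Emax Dmax p q β ps false V (mkS Emax Dmax e X d) := by
  have hn : ∀ b f h : Bool, nextState Emax Dmax (mkS Emax Dmax e X d) true b f h =
      nextState Emax Dmax (mkS Emax Dmax e X d) false b f h := by
    intro b f h
    simp [nextState, mkS, h0]
  rw [KV_eq, KV_eq]
  simp only [hn]


/-! ### Invariants -/

def MonoD (Emax Dmax : ℕ) (V : State Emax Dmax → ℝ) : Prop :=
  ∀ (e : ℕ) (X : Bool) (dL dH : ℕ), dL ≤ dH →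
    V (mkS Emax Dmax e X dL) ≤ V (mkS Emax Dmax e X dH)

def LipE (Emax Dmax : ℕ) (ps : ℝ) (V : State Emax Dmax → ℝ) : Prop :=
  ∀ (e : ℕ) (X : Bool) (dL dH : ℕ), dL ≤ dH →
    (1 - ps) * (V (mkS Emax Dmax e X dH) - V (mkS Emax Dmax e X dL)) ≤
      V (mkS Emax Dmax (e + 1) X dH) - V (mkS Emax Dmax (e + 1) X dL)

lemma mkS_norm (Emax Dmax : ℕ) (e : ℕ) (X : Bool) (d : ℕ) :
    mkS Emax Dmax e X d = mkS Emax Dmax (min e Emax) X d := by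
  simp [mkS, Prod.ext_iff, Fin.ext_iff] <;> omega

lemma mkS_sat (Emax Dmax : ℕ) (e : ℕ) (X : Bool) (d : ℕ) (h : Emax ≤ e) :
    mkS Emax Dmax (e + 1) X d = mkS Emax Dmax e X d := by
  simp [mkS, Prod.ext_iff, Fin.ext_iff] <;> omega

lemma min_sub_le {a b a' b' : ℝ} (h : b' - b ≤ a' - a) :
    min a' b' - min a b ≤ a' - a := by
  rcases le_total a b with h' | h'
  · have h1 : min a b = a := min_eq_left h'
    have h2 := min_le_left a' b'
    linarith
  · have h1 : min a b = b := min_eq_right h'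
    have h2 := min_le_right a' b'
    linarith

lemma le_min_sub {a b a' b' c : ℝ} (h1 : c ≤ a' - a) (h2 : c ≤ b' - b) :
    c ≤ min a' b' - min a b := by
  rcases le_total a' b' with h' | h'
  · have hh : min a' b' = a' := min_eq_left h'
    have h2' := min_le_left a b
    linarith
  · have hh : min a' b' = b' := min_eq_right h'
    have h2' := min_le_right a b
    linarith

/-! ### Step lemmas -/

section Steps
variable {Emax Dmax : ℕ} {p q β ps : ℝ}

/-- All parameter hypotheses bundled. -/
structure Params (p q β ps : ℝ) : Prop where
  hp0 : 0 ≤ p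
  hp1 : p ≤ 1
  hq0 : 0 ≤ q
  hq1 : q ≤ 1
  hβ0 : 0 ≤ β
  hβ1 : β ≤ 1
  hps0 : 0 ≤ ps
  hps1 : ps ≤ 1

lemma w_nonneg (H : Params p q β ps) (b f X : Bool) :
    0 ≤ bern β b * bern (if X then q else p) f := by
  refine mul_nonneg (bern_nonneg H.hβ0 H.hβ1 b) (bern_nonneg ?_ ?_ f) <;>
    cases X <;> simp [H.hp0, H.hp1, H.hq0, H.hq1]

lemma dd_le (f : Bool) {dL dH : ℕ} (hd : dL ≤ dH) (Dmax : ℕ) :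
    (if f then min dL Dmax + 1 else min dL Dmax) ≤
      (if f then min dH Dmax + 1 else min dH Dmax) := by
  cases f <;> simp <;> omega

/-- Main per-step advantage monotonicity. -/
lemma adv_step (H : Params p q β ps) (V : State Emax Dmax → ℝ) (hL : LipE Emax Dmax ps V)
    (e dm dp : ℕ) (he1 : 1 ≤ e) (he2 : e ≤ Emax) (X : Bool) (hd : dm ≤ dp) :
    KV Emax Dmax p q β ps true V (mkS Emax Dmax e X dp) -
        KV Emax Dmax p q β ps false V (mkS Emax Dmax e X dp) ≤
      KV Emax Dmax p q β ps true V (mkS Emax Dmax e X dm) -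
        KV Emax Dmax p q β ps false V (mkS Emax Dmax e X dm) := by
  rw [KV_true_mkS Emax Dmax p q β ps V e dp he1 he2 X,
      KV_true_mkS Emax Dmax p q β ps V e dm he1 he2 X,
      KV_false_mkS Emax Dmax p q β ps V e dp X,
      KV_false_mkS Emax Dmax p q β ps V e dm X,
      ← Finset.sum_sub_distrib, ← Finset.sum_sub_distrib]
  refine Finset.sum_le_sum fun b _ => ?_
  rw [← Finset.sum_sub_distrib, ← Finset.sum_sub_distrib]
  refine Finset.sum_le_sum fun f _ => ?_
  have harg : e + (if b then 1 else 0) - 1 + 1 = e + (if b then 1 else 0) := by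
    cases b <;> simp <;> omega
  have key := hL (e + (if b then 1 else 0) - 1) (if f then !X else X)
    (if f then min dm Dmax + 1 else min dm Dmax)
    (if f then min dp Dmax + 1 else min dp Dmax) (dd_le f hd Dmax)
  rw [harg] at key
  have hw := w_nonneg H b f X
  nlinarith [mul_le_mul_of_nonneg_left key hw]

lemma KV_false_mono (H : Params p q β ps) (V : State Emax Dmax → ℝ) (hM : MonoD Emax Dmax V)
    (e dL dH : ℕ) (X : Bool) (hd : dL ≤ dH) :
    KV Emax Dmax p q β ps false V (mkS Emax Dmax e X dL) ≤
      KV Emax Dmax p q β ps false V (mkS Emax Dmax e X dH) := by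
  rw [KV_false_mkS, KV_false_mkS]
  refine Finset.sum_le_sum fun b _ => Finset.sum_le_sum fun f _ => ?_
  exact mul_le_mul_of_nonneg_left
    (hM (e + (if b then 1 else 0)) (if f then !X else X) _ _ (dd_le f hd Dmax))
    (w_nonneg H b f X)

lemma KV_true_mono (H : Params p q β ps) (V : State Emax Dmax → ℝ) (hM : MonoD Emax Dmax V)
    (e dL dH : ℕ) (X : Bool) (hd : dL ≤ dH) :
    KV Emax Dmax p q β ps true V (mkS Emax Dmax e X dL) ≤
      KV Emax Dmax p q β ps true V (mkS Emax Dmax e X dH) := by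
  rcases Nat.eq_zero_or_pos (min e Emax) with h0 | h1
  · rw [KV_true_zero Emax Dmax p q β ps V e dL h0,
        KV_true_zero Emax Dmax p q β ps V e dH h0]
    exact KV_false_mono H V hM e dL dH X hd
  · rw [mkS_norm Emax Dmax e X dL, mkS_norm Emax Dmax e X dH]
    rw [KV_true_mkS Emax Dmax p q β ps V _ dL h1 (min_le_right _ _) X,
        KV_true_mkS Emax Dmax p q β ps V _ dH h1 (min_le_right _ _) X]
    refine Finset.sum_le_sum fun b _ => Finset.sum_le_sum fun f _ => ?_
    have hmono := hM (min e Emax + (if b then 1 else 0) - 1) (if f then !X else X)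
      (if f then min dL Dmax + 1 else min dL Dmax)
      (if f then min dH Dmax + 1 else min dH Dmax) (dd_le f hd Dmax)
    have hw := w_nonneg H b f X
    have h1ps : (0:ℝ) ≤ 1 - ps := by linarith [H.hps1]
    nlinarith [mul_le_mul_of_nonneg_left (mul_le_mul_of_nonneg_left hmono h1ps) hw]

lemma cost_mkS (Emax Dmax : ℕ) (e : ℕ) (X : Bool) (d : ℕ) :
    cost Emax Dmax (mkS Emax Dmax e X d) = ((min d Dmax : ℕ) : ℝ) := rfl

lemma mono_step (H : Params p q β ps) (V : State Emax Dmax → ℝ) (hM : MonoD Emax Dmax V) :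
    MonoD Emax Dmax (fun s => cost Emax Dmax s +
      min (KV Emax Dmax p q β ps false V s) (KV Emax Dmax p q β ps true V s)) := by
  intro e X dL dH hd
  simp only
  rw [cost_mkS, cost_mkS]
  have hc : ((min dL Dmax : ℕ) : ℝ) ≤ ((min dH Dmax : ℕ) : ℝ) := by
    exact_mod_cast (show min dL Dmax ≤ min dH Dmax by omega)
  exact add_le_add hc (min_le_min
    (KV_false_mono H V hM e dL dH X hd)
    (KV_true_mono H V hM e dL dH X hd))

lemma KV_true_succ (V : State Emax Dmax → ℝ) (e d : ℕ) (he2 : e + 1 ≤ Emax) (X : Bool) :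
    KV Emax Dmax p q β ps true V (mkS Emax Dmax (e + 1) X d) =
      (∑ b : Bool, ∑ f : Bool,
        bern β b * bern (if X then q else p) f *
          (ps * V (mkS Emax Dmax (e + (if b then 1 else 0)) (if f then !X else X)
              (if f then 1 else 0)))) +
        (1 - ps) * KV Emax Dmax p q β ps false V (mkS Emax Dmax e X d) := by
  rw [KV_true_mkS Emax Dmax p q β ps V (e + 1) d (by omega) he2 X,
      KV_false_mkS Emax Dmax p q β ps V e d X]
  simp only [Finset.mul_sum]
  rw [← Finset.sum_add_distrib]
  refine Finset.sum_congr rfl fun b _ => ?_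
  rw [← Finset.sum_add_distrib]
  refine Finset.sum_congr rfl fun f _ => ?_
  have harg : e + 1 + (if b then 1 else 0) - 1 = e + (if b then 1 else 0) := by
    cases b <;> simp
  rw [harg]
  ring

lemma KV_false_lip (H : Params p q β ps) (V : State Emax Dmax → ℝ) (hL : LipE Emax Dmax ps V)
    (e dL dH : ℕ) (X : Bool) (hd : dL ≤ dH) :
    (1 - ps) * (KV Emax Dmax p q β ps false V (mkS Emax Dmax e X dH) -
        KV Emax Dmax p q β ps false V (mkS Emax Dmax e X dL)) ≤
      KV Emax Dmax p q β ps false V (mkS Emax Dmax (e + 1) X dH) -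
        KV Emax Dmax p q β ps false V (mkS Emax Dmax (e + 1) X dL) := by
  rw [KV_false_mkS Emax Dmax p q β ps V e dH X, KV_false_mkS Emax Dmax p q β ps V e dL X,
      KV_false_mkS Emax Dmax p q β ps V (e + 1) dH X,
      KV_false_mkS Emax Dmax p q β ps V (e + 1) dL X,
      ← Finset.sum_sub_distrib, ← Finset.sum_sub_distrib, Finset.mul_sum]
  refine Finset.sum_le_sum fun b _ => ?_
  rw [← Finset.sum_sub_distrib, ← Finset.sum_sub_distrib, Finset.mul_sum]
  refine Finset.sum_le_sum fun f _ => ?_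
  have harg : e + 1 + (if b then 1 else 0) = e + (if b then 1 else 0) + 1 := by
    cases b <;> simp <;> omega
  rw [harg]
  have key := hL (e + (if b then 1 else 0)) (if f then !X else X)
    (if f then min dL Dmax + 1 else min dL Dmax)
    (if f then min dH Dmax + 1 else min dH Dmax) (dd_le f hd Dmax)
  have hw := w_nonneg H b f X
  nlinarith [mul_le_mul_of_nonneg_left key hw]

lemma lip_step (H : Params p q β ps) (V : State Emax Dmax → ℝ) (hM : MonoD Emax Dmax V)
    (hL : LipE Emax Dmax ps V)
    (hMN : MonoD Emax Dmax (fun s => cost Emax Dmax s +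
      min (KV Emax Dmax p q β ps false V s) (KV Emax Dmax p q β ps true V s))) :
    LipE Emax Dmax ps (fun s => cost Emax Dmax s +
      min (KV Emax Dmax p q β ps false V s) (KV Emax Dmax p q β ps true V s)) := by
  intro e X dL dH hd
  by_cases hsat : Emax ≤ e
  · rw [mkS_sat Emax Dmax e X dH hsat, mkS_sat Emax Dmax e X dL hsat]
    have h := hMN e X dL dH hd
    nlinarith [mul_nonneg H.hps0 (sub_nonneg.2 h)]
  · push_neg at hsat
    have he2 : e + 1 ≤ Emax := hsat
    have hi : KV Emax Dmax p q β ps true V (mkS Emax Dmax e X dH) -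
        KV Emax Dmax p q β ps true V (mkS Emax Dmax e X dL) ≤
        KV Emax Dmax p q β ps false V (mkS Emax Dmax e X dH) -
        KV Emax Dmax p q β ps false V (mkS Emax Dmax e X dL) := by
      rcases Nat.eq_zero_or_pos e with rfl | hegt
      · have h0 : min 0 Emax = 0 := by omega
        rw [KV_true_zero Emax Dmax p q β ps V 0 dH h0,
            KV_true_zero Emax Dmax p q β ps V 0 dL h0]
      · have := adv_step H V hL e dL dH hegt
          (by omega) X hd
        linarith
    have hii : KV Emax Dmax p q β ps true V (mkS Emax Dmax (e + 1) X dH) -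
        KV Emax Dmax p q β ps true V (mkS Emax Dmax (e + 1) X dL) =
        (1 - ps) * (KV Emax Dmax p q β ps false V (mkS Emax Dmax e X dH) -
          KV Emax Dmax p q β ps false V (mkS Emax Dmax e X dL)) := by
      rw [KV_true_succ V e dH he2 X, KV_true_succ V e dL he2 X]
      ring
    have hiii := KV_false_lip H V hL e dL dH X hd
    have hA := min_sub_le hi
    have hB := le_min_sub hiii (le_of_eq hii.symm)
    simp only
    rw [cost_mkS, cost_mkS, cost_mkS, cost_mkS]
    have hc : (0:ℝ) ≤ ((min dH Dmax : ℕ) : ℝ) - ((min dL Dmax : ℕ) : ℝ) := by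
      rw [sub_nonneg]
      exact_mod_cast (show min dL Dmax ≤ min dH Dmax by omega)
    have h1ps : (0:ℝ) ≤ 1 - ps := by linarith [H.hps1]
    nlinarith [mul_le_mul_of_nonneg_left hA h1ps, hB, hc, mul_nonneg H.hps0 hc]

/-- Both invariants hold for all value-iteration iterates. -/
lemma viter_invariants (H : Params p q β ps) (t : ℕ) :
    MonoD Emax Dmax (Viter Emax Dmax p q β ps t) ∧
      LipE Emax Dmax ps (Viter Emax Dmax p q β ps t) := by
  induction t with
  | zero =>
      constructor
      · intro e X dL dH hd
        simp [Viter]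
      · intro e X dL dH hd
        simp [Viter]
  | succ t ih =>
      obtain ⟨hM, hL⟩ := ih
      have heq : Viter Emax Dmax p q β ps (t + 1) =
          fun s => cost Emax Dmax s +
            min (KV Emax Dmax p q β ps false (Viter Emax Dmax p q β ps t) s)
                (KV Emax Dmax p q β ps true (Viter Emax Dmax p q β ps t) s) := rfl
      rw [heq]
      have hMN := mono_step H (Viter Emax Dmax p q β ps t) hM
      exact ⟨hMN, lip_step H (Viter Emax Dmax p q β ps t) hM hL hMN⟩

end Steps

/-- **Monotonicity of the transmission advantage in the VIA
(step in the proof of Theorem 1).**  For every value-iteration step `t`,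
battery level `1 ≤ e ≤ E_max`, source state `X`, and VIA values
`1 ≤ Δ⁻ ≤ Δ⁺ ≤ Δ_max`, one has `ΔV_t(e,X,Δ⁺) ≤ ΔV_t(e,X,Δ⁻)`, where
`ΔV_t(S) = (K_1 V_t)(S) − (K_0 V_t)(S)`. -/
theorem advantage_antitone_in_VIA (Emax Dmax : ℕ)
    (p q β ps : ℝ) (hp0 : 0 ≤ p) (hp1 : p ≤ 1) (hq0 : 0 ≤ q) (hq1 : q ≤ 1)
    (hβ0 : 0 ≤ β) (hβ1 : β ≤ 1) (hps0 : 0 ≤ ps) (hps1 : ps ≤ 1)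
    (t : ℕ) (e : ℕ) (he1 : 1 ≤ e) (he2 : e ≤ Emax) (X : Bool)
    (dm dp : ℕ) (hdm : 1 ≤ dm) (hdmdp : dm ≤ dp) (hdp : dp ≤ Dmax) :
    dV Emax Dmax p q β ps t (⟨e, by omega⟩, X, ⟨dp, by omega⟩) ≤
      dV Emax Dmax p q β ps t (⟨e, by omega⟩, X, ⟨dm, by omega⟩) := by
  have H : Params p q β ps := ⟨hp0, hp1, hq0, hq1, hβ0, hβ1, hps0, hps1⟩
  have hL := (viter_invariants (Emax := Emax) (Dmax := Dmax) H t).2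
  have hsp : ((⟨e, by omega⟩, X, ⟨dp, by omega⟩) : State Emax Dmax) =
      mkS Emax Dmax e X dp := by
    simp [mkS, Prod.ext_iff, Fin.ext_iff] <;> omega
  have hsm : ((⟨e, by omega⟩, X, ⟨dm, by omega⟩) : State Emax Dmax) =
      mkS Emax Dmax e X dm := by
    simp [mkS, Prod.ext_iff, Fin.ext_iff] <;> omega
  unfold dV
  rw [hsp, hsm]
  exact adv_step H (Viter Emax Dmax p q β ps t) hL e dm dp he1 he2 X hdmdp


end VIA
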